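/- arXiv:1407.4328 — 5 statements merged into one kernel-verified Lean document; each statement's English description precedes it below -/
import Mathlib

section
/- Let n be a natural number and P an (n+1)×(n+1) real matrix with all entries nonnegative and perm(P) > 0. Define the matrix Q by Q i j = P i j · perm(P_{ij}) / perm(P), where P_{ij} = P.submatrix i.succAbove j.succAbove is the minor of P obtained by deleting row i and column j. Then Q is doubly stochastic: all entries of Q are nonnegative, every row of Q sums to 1, and every column of Q sums to 1. -/
open Equiv Finset Matrix

namespace BPAux

variable {R : Type*} [CommRing R]

theorem permanent_succ_column_zero {n : ℕ} (A : Matrix (Fin n.succ) (Fin n.succ) R) :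
    A.permanent = ∑ i : Fin n.succ, A i 0 * (A.submatrix i.succAbove Fin.succ).permanent := by
  rw [Matrix.permanent, Finset.univ_perm_fin_succ, ← Finset.univ_product_univ]
  simp only [Finset.sum_map, Equiv.toEmbedding_apply, Finset.sum_product]
  refine Finset.sum_congr rfl fun i _ => Fin.cases ?_ (fun i => ?_) i
  · simp only [Matrix.permanent, Finset.mul_sum]
    refine Finset.sum_congr rfl fun σ _ => ?_
    rw [Fin.prod_univ_succ]
    simp [Equiv.Perm.decomposeFin_symm_apply_zero,
      Equiv.Perm.decomposeFin_symm_apply_succ, Fin.succAbove_zero, Equiv.swap_self,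
      Matrix.submatrix_apply]
  · rw [← Matrix.permanent_permute_cols i.cycleRange (A.submatrix i.succ.succAbove Fin.succ),
      Matrix.permanent, Finset.mul_sum]
    refine Finset.sum_congr rfl fun σ _ => ?_
    rw [Fin.prod_univ_succ]
    simp only [Equiv.Perm.decomposeFin_symm_apply_zero,
      Equiv.Perm.decomposeFin_symm_apply_succ, Matrix.submatrix_apply,
      Fin.succAbove_cycleRange, Equiv.Perm.coe_mul, Function.comp_apply, id_eq]

theorem permanent_succ_row_zero {n : ℕ} (A : Matrix (Fin n.succ) (Fin n.succ) R) :
    A.permanent = ∑ j : Fin n.succ, A 0 j * (A.submatrix Fin.succ j.succAbove).permanent := by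
  rw [← Matrix.permanent_transpose A, permanent_succ_column_zero]
  refine Finset.sum_congr rfl fun i _ => ?_
  rw [← Matrix.permanent_transpose]
  simp only [Matrix.transpose_apply, Matrix.transpose_submatrix, Matrix.transpose_transpose]

theorem permanent_succ_row {n : ℕ} (A : Matrix (Fin n.succ) (Fin n.succ) R) (i : Fin n.succ) :
    A.permanent = ∑ j : Fin n.succ, A i j * (A.submatrix i.succAbove j.succAbove).permanent := by
  rw [← Matrix.permanent_permute_cols i.cycleRange⁻¹ A, permanent_succ_row_zero]
  refine Finset.sum_congr rfl fun j _ => ?_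
  rw [Matrix.submatrix_apply, Matrix.submatrix_submatrix]
  congr 1
  · rw [id_eq, Equiv.Perm.inv_def, Fin.cycleRange_symm_zero]
  · congr 1
    ext i' j'
    simp [Matrix.submatrix_apply, Equiv.Perm.inv_def, Fin.cycleRange_symm_succ]

theorem permanent_succ_column {n : ℕ} (A : Matrix (Fin n.succ) (Fin n.succ) R) (j : Fin n.succ) :
    A.permanent = ∑ i : Fin n.succ, A i j * (A.submatrix i.succAbove j.succAbove).permanent := by
  rw [← Matrix.permanent_transpose, permanent_succ_row _ j]
  refine Finset.sum_congr rfl fun i _ => ?_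
  rw [← Matrix.permanent_transpose, Matrix.transpose_apply, Matrix.transpose_submatrix,
    Matrix.transpose_transpose]

theorem permanent_nonneg {m : Type*} [DecidableEq m] [Fintype m]
    (A : Matrix m m ℝ) (hA : ∀ i j, 0 ≤ A i j) : 0 ≤ A.permanent :=
  Finset.sum_nonneg fun σ _ => Finset.prod_nonneg fun i _ => hA _ _

end BPAux

theorem bp_constraint_output_doublyStochastic
    (n : ℕ) (P : Matrix (Fin (n + 1)) (Fin (n + 1)) ℝ)
    (hP : ∀ i j, 0 ≤ P i j) (hperm : 0 < P.permanent)
    (Q : Matrix (Fin (n + 1)) (Fin (n + 1)) ℝ)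
    (hQ : ∀ i j, Q i j =
      P i j * (P.submatrix i.succAbove j.succAbove).permanent / P.permanent) :
    (∀ i j, 0 ≤ Q i j) ∧ (∀ i, ∑ j, Q i j = 1) ∧ (∀ j, ∑ i, Q i j = 1) := by
  refine ⟨fun i j => ?_, fun i => ?_, fun j => ?_⟩
  · rw [hQ]
    exact div_nonneg (mul_nonneg (hP i j)
      (BPAux.permanent_nonneg _ fun a b => hP _ _)) hperm.le
  · simp only [hQ, ← Finset.sum_div]
    rw [← BPAux.permanent_succ_row P i, div_self hperm.ne']
  · simp only [hQ, ← Finset.sum_div]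
    rw [← BPAux.permanent_succ_column P j, div_self hperm.ne']
end

section
/- Let q be a natural number, ι a finite type, S : ι → Finset (Fin q) a family of subsets, and j ∈ Fin q. Suppose there exists a subset I ⊆ ι such that the union U = ⋃_{k ∈ I} S k satisfies U.card = I.card and j ∈ U. Then there is no injective function f : ι → Fin q with f k ∈ S k for all k ∈ ι and f k ≠ j for all k ∈ ι. -/
theorem bottleneck_excludes_value
    (q : ℕ) (ι : Type*) [Fintype ι] [DecidableEq ι]
    (S : ι → Finset (Fin q)) (j : Fin q)
    (I : Finset ι) (hcard : (I.biUnion S).card = I.card) (hj : j ∈ I.biUnion S) :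
    ¬ ∃ f : ι → Fin q, Function.Injective f ∧ (∀ k, f k ∈ S k) ∧ ∀ k, f k ≠ j := by
  rintro ⟨f, hinj, hmem, hne⟩
  have hsub : I.image f ⊆ I.biUnion S := by
    intro x hx
    obtain ⟨k, hk, rfl⟩ := Finset.mem_image.mp hx
    exact Finset.mem_biUnion.mpr ⟨k, hk, hmem k⟩
  have hcard' : (I.biUnion S).card ≤ (I.image f).card := by
    rw [Finset.card_image_of_injective _ hinj, hcard]
  have heq := Finset.eq_of_subset_of_card_le hsub hcard'
  rw [← heq] at hj
  obtain ⟨k, _, hk⟩ := Finset.mem_image.mp hj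
  exact hne k hk
end

section
/- Let q be a natural number, ι a finite type, S : ι → Finset (Fin q), and j ∈ Fin q. Assume the Hall condition: for every subset I ⊆ ι, I.card ≤ (⋃_{k ∈ I} S k).card. Then the following are equivalent: (a) there is no injective f : ι → Fin q with f k ∈ S k for all k and f k ≠ j for all k; (b) there exists I ⊆ ι with (⋃_{k ∈ I} S k).card = I.card and j ∈ ⋃_{k ∈ I} S k. -/
theorem value_excluded_iff_bottleneck
    (q : ℕ) (ι : Type*) [Fintype ι] [DecidableEq ι]
    (S : ι → Finset (Fin q)) (j : Fin q)
    (hall : ∀ I : Finset ι, I.card ≤ (I.biUnion S).card) :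
    (¬ ∃ f : ι → Fin q, Function.Injective f ∧ (∀ k, f k ∈ S k) ∧ ∀ k, f k ≠ j) ↔
      ∃ I : Finset ι, (I.biUnion S).card = I.card ∧ j ∈ I.biUnion S := by
  set S' : ι → Finset (Fin q) := fun k => (S k).erase j with hS'
  have hbU : ∀ I : Finset ι, I.biUnion S' = (I.biUnion S).erase j := by
    intro I
    ext x
    simp [hS', Finset.mem_biUnion, Finset.mem_erase, and_assoc]
    tauto
  have h1 : (∃ f : ι → Fin q, Function.Injective f ∧ (∀ k, f k ∈ S k) ∧ ∀ k, f k ≠ j) ↔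
      ∃ f : ι → Fin q, Function.Injective f ∧ ∀ k, f k ∈ S' k := by
    constructor
    · rintro ⟨f, hinj, hmem, hne⟩
      exact ⟨f, hinj, fun k => Finset.mem_erase.mpr ⟨hne k, hmem k⟩⟩
    · rintro ⟨f, hinj, hmem⟩
      exact ⟨f, hinj, fun k => (Finset.mem_erase.mp (hmem k)).2,
        fun k => (Finset.mem_erase.mp (hmem k)).1⟩
  rw [h1, ← Finset.all_card_le_biUnion_card_iff_exists_injective, not_forall]
  constructor
  · rintro ⟨I, hI⟩
    rw [hbU I] at hI
    push_neg at hI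
    have hj : j ∈ I.biUnion S := by
      by_contra hj
      rw [Finset.erase_eq_of_notMem hj] at hI
      exact absurd (hall I) (not_le.mpr hI)
    have hc := Finset.card_erase_of_mem hj
    have := hall I
    refine ⟨I, ?_, hj⟩
    omega
  · rintro ⟨I, hcard, hj⟩
    refine ⟨I, ?_⟩
    rw [hbU I, Finset.card_erase_of_mem hj, hcard]
    have : 0 < I.card := by
      have := Finset.card_pos.mpr ⟨j, hj⟩
      rw [hcard] at this
      exact this
    omega
end

section
/- Let q and m be natural numbers, c : Fin m → ℕ a vector of cardinalities, k a natural number, v : Fin m → Fin q a family of values, and π a permutation of Fin q. Let Out(S) denote the constraint-node output set of S : Fin m → Finset (Fin q). Then the number of families S : Fin m → Finset (Fin q) with v t ∈ S t and (S t).card = c t for all t and (Out S).card = k equals the number of families S with π (v t) ∈ S t and (S t).card = c t for all t and (Out S).card = k. -/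
open Classical in
/-- The constraint-node output set: the set of values `j` for which there exists a system of
distinct representatives of the input subset messages avoiding `j`. -/
noncomputable def constraintOut {q m : ℕ} (S : Fin m → Finset (Fin q)) : Finset (Fin q) :=
  Finset.univ.filter (fun j =>
    ∃ f : Fin m → Fin q, Function.Injective f ∧ (∀ t, f t ∈ S t) ∧ ∀ t, f t ≠ j)

open Classical in
lemma constraintOut_image {q m : ℕ} (π : Equiv.Perm (Fin q)) (S : Fin m → Finset (Fin q)) :
    constraintOut (fun t => (S t).image π) = (constraintOut S).image π := by
  ext j
  simp only [constraintOut, Finset.mem_filter, Finset.mem_univ, true_and, Finset.mem_image]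
  constructor
  · rintro ⟨f, hinj, hmem, hne⟩
    refine ⟨π.symm j, ⟨π.symm ∘ f, ?_, fun t => ?_, fun t h => ?_⟩, by simp⟩
    · exact (Equiv.injective π.symm).comp hinj
    · obtain ⟨x, hx, hxe⟩ := hmem t
      simpa [← hxe] using hx
    · exact hne t (by simpa using congrArg π h)
  · rintro ⟨i, ⟨f, hinj, hmem, hne⟩, rfl⟩
    refine ⟨π ∘ f, (Equiv.injective π).comp hinj, fun t => ⟨f t, hmem t, rfl⟩,
      fun t h => hne t (π.injective h)⟩

open Classical in
theorem constraint_node_count_alphabet_symmetric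
    (q m : ℕ) (c : Fin m → ℕ) (k : ℕ) (v : Fin m → Fin q) (π : Equiv.Perm (Fin q)) :
    (Finset.univ.filter (fun S : Fin m → Finset (Fin q) =>
        (∀ t, v t ∈ S t ∧ (S t).card = c t) ∧ (constraintOut S).card = k)).card =
    (Finset.univ.filter (fun S : Fin m → Finset (Fin q) =>
        (∀ t, π (v t) ∈ S t ∧ (S t).card = c t) ∧ (constraintOut S).card = k)).card := by
  apply Finset.card_bij (fun S _ => fun t => (S t).image π)
  · intro S hS
    simp only [Finset.mem_filter, Finset.mem_univ, true_and] at hS ⊢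
    obtain ⟨h1, h2⟩ := hS
    refine ⟨fun t => ⟨Finset.mem_image_of_mem π (h1 t).1, ?_⟩, ?_⟩
    · rw [Finset.card_image_of_injective _ π.injective]; exact (h1 t).2
    · rw [constraintOut_image, Finset.card_image_of_injective _ π.injective]; exact h2
  · intro S₁ _ S₂ _ h
    funext t
    have := congrFun h t
    have : ((S₁ t).image π).image π.symm = ((S₂ t).image π).image π.symm := by rw [this]
    simpa [Finset.image_image, Function.comp] using this
  · intro S hS
    refine ⟨fun t => (S t).image π.symm, ?_, ?_⟩
    · simp only [Finset.mem_filter, Finset.mem_univ, true_and] at hS ⊢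
      obtain ⟨h1, h2⟩ := hS
      refine ⟨fun t => ⟨?_, ?_⟩, ?_⟩
      · have := Finset.mem_image_of_mem π.symm (h1 t).1
        simpa using this
      · rw [Finset.card_image_of_injective _ π.symm.injective]; exact (h1 t).2
      · have : (fun t => (S t).image π.symm) = fun t => (S t).image (π.symm : Equiv.Perm (Fin q)) := rfl
        rw [this, constraintOut_image, Finset.card_image_of_injective _ π.symm.injective]; exact h2
    · funext t
      ext x
      simp
end

section
/- Let q ≥ 1 and m ≥ 1 be natural numbers, fix the element a = 0 of Fin q, and let P : ℕ → ℝ be nonnegative with P(j) = 0 unless 1 ≤ j ≤ q. For a subset S ⊆ Fin q with a ∈ S, define μ(S) = P(S.card) / C(q − 1, S.card − 1). For a cardinality vector j : Fin m → ℕ, let N_k(j) be the number of families S : Fin m → Finset (Fin q) with a ∈ S t and (S t).card = j t for all t and (⋂_t S t).card = k. Then for every natural number k, ∑_{S : Fin m → Finset (Fin q), (∀ t, a ∈ S t), (⋂_t S t).card = k} ∏_t μ(S t) = ∑_{j : Fin m → ℕ, j non-decreasing, (∀ t, 1 ≤ j t ≤ q)} Γ(j) · (N_k(j) / ∏_t C(q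 − 1, j t − 1)) · ∏_t P(j t), where Γ(j) = m! / ∏_{i} #{t : j t = i}! is the multiplicity of the non-decreasing tuple j. -/
open Finset

section Aux

variable {q m : ℕ}

private lemma inf_comp_perm (S : Fin m → Finset (Fin q)) (σ : Equiv.Perm (Fin m)) :
    Finset.univ.inf (S ∘ σ) = Finset.univ.inf S := by
  classical
  rw [← Finset.inf_image Finset.univ (⇑σ) S, Finset.image_univ_equiv]

private lemma N_comp_perm (hq : 1 ≤ q) (k : ℕ) (j : Fin m → ℕ) (σ : Equiv.Perm (Fin m)) :
    (Finset.univ.filter (fun S : Fin m → Finset (Fin q) =>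
        (∀ t, (⟨0, hq⟩ : Fin q) ∈ S t ∧ (S t).card = (j ∘ σ) t) ∧
          (Finset.univ.inf S).card = k)).card
      =
    (Finset.univ.filter (fun S : Fin m → Finset (Fin q) =>
        (∀ t, (⟨0, hq⟩ : Fin q) ∈ S t ∧ (S t).card = j t) ∧
          (Finset.univ.inf S).card = k)).card := by
  classical
  apply Finset.card_bij' (fun S _ => S ∘ ⇑σ⁻¹) (fun S _ => S ∘ ⇑σ)
  · intro S hS
    simp only [Finset.mem_filter, Finset.mem_univ, true_and] at hS ⊢
    obtain ⟨h1, h2⟩ := hS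
    refine ⟨fun t => ?_, ?_⟩
    · obtain ⟨ha, hc⟩ := h1 (σ⁻¹ t)
      exact ⟨ha, by simpa using hc⟩
    · rwa [inf_comp_perm]
  · intro S hS
    simp only [Finset.mem_filter, Finset.mem_univ, true_and] at hS ⊢
    obtain ⟨h1, h2⟩ := hS
    refine ⟨fun t => ⟨(h1 (σ t)).1, (h1 (σ t)).2⟩, ?_⟩
    rwa [inf_comp_perm]
  · intro S _; funext t; simp
  · intro S _; funext t; simp

private lemma sort_self_of_monotone {w : Fin m → ℕ} (hw : Monotone w) :
    w ∘ ⇑(Tuple.sort w) = w := by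
  rw [Tuple.sort_eq_refl_iff_monotone.mpr hw]; rfl

/-- Orbit-stabilizer counting: the number of rearrangements of a monotone tuple times
the product of factorials of its level-set sizes equals `m!`. -/
private lemma fiber_card (w : Fin m → ℕ) (hw : Monotone w)
    (hmem : w ∈ Fintype.piFinset fun _ : Fin m => Finset.Icc 1 q) :
    ((Fintype.piFinset fun _ : Fin m => Finset.Icc 1 q).filter
        (fun j => j ∘ ⇑(Tuple.sort j) = w)).card *
      ∏ i ∈ Finset.Icc 1 q, (Finset.univ.filter (fun t : Fin m => w t = i)).card.factorial
      = m.factorial := by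
  classical
  set F := (Fintype.piFinset fun _ : Fin m => Finset.Icc 1 q).filter
      (fun j => j ∘ ⇑(Tuple.sort j) = w) with hF
  have hmaps : ∀ σ : Equiv.Perm (Fin m), σ ∈ (Finset.univ : Finset (Equiv.Perm (Fin m))) →
      w ∘ ⇑σ ∈ F := by
    intro σ _
    rw [hF, Finset.mem_filter]
    constructor
    · rw [Fintype.mem_piFinset]
      intro t
      simpa using (Fintype.mem_piFinset.mp hmem (σ t))
    · rw [Tuple.comp_perm_comp_sort_eq_comp_sort, sort_self_of_monotone hw]
  have h1 : (Finset.univ : Finset (Equiv.Perm (Fin m))).card =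
      ∑ j ∈ F, (Finset.univ.filter (fun σ : Equiv.Perm (Fin m) => w ∘ ⇑σ = j)).card :=
    Finset.card_eq_sum_card_fiberwise hmaps
  have h2 : ∀ j ∈ F, (Finset.univ.filter (fun σ : Equiv.Perm (Fin m) => w ∘ ⇑σ = j)).card =
      Fintype.card {g : Equiv.Perm (Fin m) // w ∘ ⇑g = w} := by
    intro j hj
    rw [hF, Finset.mem_filter] at hj
    have hsj : w ∘ ⇑(Tuple.sort j)⁻¹ = j := by
      rw [← hj.2]; funext t; simp
    rw [Fintype.card_subtype]
    apply Finset.card_bij' (fun σ _ => σ * Tuple.sort j) (fun g _ => g * (Tuple.sort j)⁻¹)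
    · intro σ hσ
      simp only [Finset.mem_filter, Finset.mem_univ, true_and] at hσ ⊢
      funext t
      have e1 : w (σ (Tuple.sort j t)) = j (Tuple.sort j t) := congrFun hσ _
      have e2 : j (Tuple.sort j t) = w t := congrFun hj.2 t
      simpa using e1.trans e2
    · intro g hg
      simp only [Finset.mem_filter, Finset.mem_univ, true_and] at hg ⊢
      funext t
      have e1 : w (g ((Tuple.sort j)⁻¹ t)) = w ((Tuple.sort j)⁻¹ t) := congrFun hg _
      have e2 : w ((Tuple.sort j)⁻¹ t) = j t := congrFun hsj t
      simpa using e1.trans e2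
    · intro σ _; simp [mul_assoc]
    · intro g _; simp [mul_assoc]
  have h3 : Fintype.card {g : Equiv.Perm (Fin m) // w ∘ ⇑g = w} =
      ∏ i ∈ Finset.Icc 1 q, (Finset.univ.filter (fun t : Fin m => w t = i)).card.factorial := by
    rw [DomMulAct.stabilizer_card']
    rw [Finset.prod_subset (fun i hi => ?_) (fun i _ hi => ?_)]
    · apply Finset.prod_congr rfl
      intro i _
      rw [Fintype.card_subtype]
    · rw [Finset.mem_image] at hi
      obtain ⟨t, _, rfl⟩ := hi
      exact Fintype.mem_piFinset.mp hmem t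
    · have : Fintype.card {a : Fin m // w a = i} = 0 := by
        rw [Fintype.card_eq_zero_iff]
        constructor
        intro ⟨t, ht⟩
        exact hi (Finset.mem_image.mpr ⟨t, Finset.mem_univ t, ht⟩)
      rw [this]; rfl
  have h4 : (Finset.univ : Finset (Equiv.Perm (Fin m))).card = m.factorial := by
    rw [Finset.card_univ, Fintype.card_perm, Fintype.card_fin]
  rw [← h4, h1, Finset.sum_congr rfl h2, Finset.sum_const, smul_eq_mul, h3]

end Aux

open Classical in
theorem variable_node_density_evolution
    (q m : ℕ) (hq : 1 ≤ q) (hm : 1 ≤ m)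
    (P : ℕ → ℝ) (hP : ∀ j, 0 ≤ P j) (hP0 : ∀ j, ¬(1 ≤ j ∧ j ≤ q) → P j = 0)
    (k : ℕ) :
    -- LHS: sum over all families of subsets containing `a = 0` whose intersection has
    -- cardinality `k`, of the product of the probabilities `μ (S t)` of the subsets.
    ∑ S ∈ Finset.univ.filter (fun S : Fin m → Finset (Fin q) =>
          (∀ t, (⟨0, hq⟩ : Fin q) ∈ S t) ∧ (Finset.univ.inf S).card = k),
        ∏ t, P (S t).card / ((q - 1).choose ((S t).card - 1) : ℝ)
      =
    -- RHS: sum over non-decreasing cardinality vectors `j` with entries in `{1, …, q}`,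
    -- weighted by the multiplicity `Γ(j)`, the conditional probability `N_k(j) / ∏ C(q-1, jₜ-1)`,
    -- and the probability `∏ P(jₜ)` of the cardinality combination.
    ∑ j ∈ (Fintype.piFinset fun _ : Fin m => Finset.Icc 1 q).filter
          (fun j : Fin m → ℕ => Monotone j),
        ((m.factorial : ℝ) /
            ∏ i ∈ Finset.Icc 1 q,
              ((Finset.univ.filter (fun t : Fin m => j t = i)).card.factorial : ℝ)) *
          (((Finset.univ.filter (fun S : Fin m → Finset (Fin q) =>
                (∀ t, (⟨0, hq⟩ : Fin q) ∈ S t ∧ (S t).card = j t) ∧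
                  (Finset.univ.inf S).card = k)).card : ℝ) /
            ∏ t, ((q - 1).choose (j t - 1) : ℝ)) *
          ∏ t, P (j t) := by
  classical
  -- the common summand
  set G : (Fin m → ℕ) → ℝ := fun j =>
    ((Finset.univ.filter (fun S : Fin m → Finset (Fin q) =>
        (∀ t, (⟨0, hq⟩ : Fin q) ∈ S t ∧ (S t).card = j t) ∧
          (Finset.univ.inf S).card = k)).card : ℝ) *
      ∏ t, P (j t) / ((q - 1).choose (j t - 1) : ℝ) with hGdef
  -- invariance of G under permutations
  have hGinv : ∀ (j : Fin m → ℕ) (σ : Equiv.Perm (Fin m)), G (j ∘ ⇑σ) = G j := by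
    intro j σ
    simp only [hGdef]
    rw [N_comp_perm hq k j σ]
    congr 1
    simp only [Function.comp_apply]
    exact Equiv.prod_comp σ (fun t => P (j t) / ((q - 1).choose (j t - 1) : ℝ))
  -- Step A: LHS equals the sum of G over all cardinality vectors
  have stepA : (∑ S ∈ Finset.univ.filter (fun S : Fin m → Finset (Fin q) =>
          (∀ t, (⟨0, hq⟩ : Fin q) ∈ S t) ∧ (Finset.univ.inf S).card = k),
        ∏ t, P (S t).card / ((q - 1).choose ((S t).card - 1) : ℝ))
      = ∑ j ∈ (Fintype.piFinset fun _ : Fin m => Finset.Icc 1 q), G j := by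
    rw [← Finset.sum_fiberwise_of_maps_to
      (g := fun S : Fin m → Finset (Fin q) => fun t => (S t).card)
      (t := Fintype.piFinset fun _ : Fin m => Finset.Icc 1 q) ?_ ]
    · apply Finset.sum_congr rfl
      intro j _
      rw [Finset.filter_filter]
      have hsets : (Finset.univ.filter (fun S : Fin m → Finset (Fin q) =>
            ((∀ t, (⟨0, hq⟩ : Fin q) ∈ S t) ∧ (Finset.univ.inf S).card = k) ∧
              (fun t => (S t).card) = j))
          = Finset.univ.filter (fun S : Fin m → Finset (Fin q) =>
            (∀ t, (⟨0, hq⟩ : Fin q) ∈ S t ∧ (S t).card = j t) ∧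
              (Finset.univ.inf S).card = k) := by
        apply Finset.filter_congr
        intro S _
        constructor
        · rintro ⟨⟨h1, h2⟩, h3⟩
          exact ⟨fun t => ⟨h1 t, congrFun h3 t⟩, h2⟩
        · rintro ⟨h1, h2⟩
          exact ⟨⟨fun t => (h1 t).1, h2⟩, funext fun t => (h1 t).2⟩
      rw [hsets]
      have hconst : ∀ S ∈ Finset.univ.filter (fun S : Fin m → Finset (Fin q) =>
            (∀ t, (⟨0, hq⟩ : Fin q) ∈ S t ∧ (S t).card = j t) ∧
              (Finset.univ.inf S).card = k),
          (∏ t, P (S t).card / ((q - 1).choose ((S t).card - 1) : ℝ))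
            = ∏ t, P (j t) / ((q - 1).choose (j t - 1) : ℝ) := by
        intro S hS
        rw [Finset.mem_filter] at hS
        exact Finset.prod_congr rfl fun t _ => by rw [(hS.2.1 t).2]
      rw [Finset.sum_congr rfl hconst, Finset.sum_const, nsmul_eq_mul, hGdef]
    · intro S hS
      rw [Finset.mem_filter] at hS
      rw [Fintype.mem_piFinset]
      intro t
      rw [Finset.mem_Icc]
      constructor
      · exact Finset.card_pos.mpr ⟨⟨0, hq⟩, hS.2.1 t⟩
      · calc (S t).card ≤ (Finset.univ : Finset (Fin q)).card :=
              Finset.card_le_card (Finset.subset_univ _)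
          _ = q := by rw [Finset.card_univ, Fintype.card_fin]
  -- Step C: regroup the sum over all vectors by their sorted version
  have stepC : (∑ j ∈ (Fintype.piFinset fun _ : Fin m => Finset.Icc 1 q), G j)
      = ∑ w ∈ (Fintype.piFinset fun _ : Fin m => Finset.Icc 1 q).filter
            (fun j : Fin m → ℕ => Monotone j),
          (((Fintype.piFinset fun _ : Fin m => Finset.Icc 1 q).filter
              (fun j => j ∘ ⇑(Tuple.sort j) = w)).card : ℝ) * G w := by
    rw [← Finset.sum_fiberwise_of_maps_to
      (g := fun j : Fin m → ℕ => j ∘ ⇑(Tuple.sort j))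
      (t := (Fintype.piFinset fun _ : Fin m => Finset.Icc 1 q).filter
            (fun j : Fin m → ℕ => Monotone j)) ?_ ]
    · apply Finset.sum_congr rfl
      intro w hw
      rw [Finset.mem_filter] at hw
      have hG : ∀ j ∈ (Fintype.piFinset fun _ : Fin m => Finset.Icc 1 q).filter
            (fun j => j ∘ ⇑(Tuple.sort j) = w), G j = G w := by
        intro j hj
        rw [Finset.mem_filter] at hj
        have : G w = G j := by
          rw [← hj.2]
          exact hGinv j (Tuple.sort j)
        exact this.symm
      rw [Finset.sum_congr rfl hG, Finset.sum_const, nsmul_eq_mul]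
    · intro j hj
      rw [Finset.mem_filter]
      constructor
      · rw [Fintype.mem_piFinset]
        intro t
        exact Fintype.mem_piFinset.mp hj (Tuple.sort j t)
      · exact Tuple.monotone_sort j
  -- Step B: identify the coefficients on the RHS
  rw [stepA, stepC]
  apply Finset.sum_congr rfl
  intro w hw
  rw [Finset.mem_filter] at hw
  have hfc := fiber_card (q := q) w hw.2 hw.1
  have hprodpos : (0:ℝ) < ∏ i ∈ Finset.Icc 1 q,
      ((Finset.univ.filter (fun t : Fin m => w t = i)).card.factorial : ℝ) := by
    apply Finset.prod_pos
    intro i _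
    exact_mod_cast Nat.factorial_pos _
  have hcoef : ((m.factorial : ℝ) /
      ∏ i ∈ Finset.Icc 1 q,
        ((Finset.univ.filter (fun t : Fin m => w t = i)).card.factorial : ℝ))
      = (((Fintype.piFinset fun _ : Fin m => Finset.Icc 1 q).filter
          (fun j => j ∘ ⇑(Tuple.sort j) = w)).card : ℝ) := by
    rw [div_eq_iff (ne_of_gt hprodpos)]
    rw [← hfc]
    push_cast
    ring
  rw [hcoef]
  simp only [hGdef]
  rw [Finset.prod_div_distrib]
  ring
end
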